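/- Let Γ be the graph of Proposition 1.8 (center clique [n], peripheral vertices n+1,…,M=2(n+m) each connected to all of [n], plus the extra peripheral edges (2k−1,2k) for k > n), with δ < 1/6 and m = ⌊δn/2⌋. Then for κ = δ/8 and every set J ⊆ [M] with |J| ≤ M/2, one has |∂(J)| − (1−δ)|Con(J)| ≥ κ|J|. -/

import Mathlib

/-!
Every center vertex is adjacent to all other vertices. If `J` meets the center, the induced
graph on `J` is therefore connected and every vertex outside `J` lies in `∂J`, so the claim
reduces to `|J| ≤ M/2`. If `J` avoids the center, then the whole center lies in `∂J`, and
the trivial bound `|Con J| ≤ |J| ≤ m + n ≤ (1 + δ/2) n` suffices.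
-/

/-- The graph of Proposition 1.8: on M = 2(m+n) vertices (0-indexed), vertices
0,…,n−1 form a clique (the center), every vertex ≥ n is connected to all center
vertices, and additionally the peripheral pairs (2j, 2j+1) for j ≥ n are connected. -/
def periGraph (n m : ℕ) : SimpleGraph (Fin (2 * (m + n))) where
  Adj v w := v ≠ w ∧ (v.1 < n ∨ w.1 < n ∨
    (2 * n ≤ v.1 ∧ 2 * n ≤ w.1 ∧
      ((w.1 = v.1 + 1 ∧ v.1 % 2 = 0) ∨ (v.1 = w.1 + 1 ∧ w.1 % 2 = 0))))
  symm := ⟨by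
    rintro v w ⟨h1, h2⟩
    exact ⟨fun h => h1 h.symm, by tauto⟩⟩
  loopless := ⟨by rintro v ⟨h1, _⟩; exact h1 rfl⟩

namespace SimpleGraph

variable {V : Type*} (G : SimpleGraph V)

/-- The paper's `∂(J)`. -/
def outerBoundary (J : Finset V) : Set V := {i | i ∉ J ∧ ∃ j ∈ J, G.Adj j i}

variable {G}

lemma outerBoundary_eq_compl {J : Finset V} {v : V} (hv : v ∈ J) (hadj : ∀ w ∉ J, G.Adj v w) :
    G.outerBoundary J = (↑J)ᶜ :=
  Set.ext fun w => ⟨And.left, fun hw => ⟨hw, v, hv, hadj w hw⟩⟩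

lemma subset_outerBoundary {J : Finset V} {U : Set V} {v : V} (hv : v ∈ J)
    (hU : ∀ u ∈ U, u ∉ J ∧ G.Adj v u) : U ⊆ G.outerBoundary J :=
  fun u hu => ⟨(hU u hu).1, v, hv, (hU u hu).2⟩

lemma connected_of_forall_adj {v : V} (hadj : ∀ w, w ≠ v → G.Adj v w) : G.Connected :=
  G.connected_iff_exists_forall_reachable.mpr ⟨v, fun w => by
    rcases eq_or_ne w v with rfl | hw
    · exact Reachable.refl w
    · exact (hadj w hw).reachable⟩

lemma Connected.card_connectedComponent (hG : G.Connected) : Nat.card G.ConnectedComponent = 1 :=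
  have := hG.preconnected.subsingleton_connectedComponent
  have := hG.nonempty
  Nat.card_unique

lemma card_connectedComponent_le_card [Finite V] :
    Nat.card G.ConnectedComponent ≤ Nat.card V :=
  Nat.card_le_card_of_surjective _ Quot.mk_surjective

end SimpleGraph

open SimpleGraph

section PeriGraph

variable {n m : ℕ}

lemma periGraph_adj_of_lt {v w : Fin (2 * (m + n))} (hvw : v ≠ w) (hv : v.1 < n) :
    (periGraph n m).Adj v w :=
  ⟨hvw, Or.inl hv⟩

lemma card_connectedComponent_induce_periGraph_of_lt {J : Finset (Fin (2 * (m + n)))}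
    {v : Fin (2 * (m + n))} (hv : v ∈ J) (hvn : v.1 < n) :
    Nat.card ((periGraph n m).induce (J : Set (Fin (2 * (m + n))))).ConnectedComponent = 1 :=
  Connected.card_connectedComponent <| connected_of_forall_adj (v := ⟨v, hv⟩) fun _ hw =>
    periGraph_adj_of_lt (fun h => hw (Subtype.ext h.symm)) hvn

lemma ncard_outerBoundary_periGraph_of_lt {J : Finset (Fin (2 * (m + n)))}
    {v : Fin (2 * (m + n))} (hv : v ∈ J) (hvn : v.1 < n) :
    ((periGraph n m).outerBoundary J).ncard = 2 * (m + n) - J.card := by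
  rw [outerBoundary_eq_compl hv fun w hw => periGraph_adj_of_lt (fun h => hw (h ▸ hv)) hvn,
    ← Finset.coe_compl, Set.ncard_coe_finset, Finset.card_compl, Fintype.card_fin]

lemma le_ncard_outerBoundary_periGraph {J : Finset (Fin (2 * (m + n)))}
    {v : Fin (2 * (m + n))} (hv : v ∈ J) (hJ : ∀ j ∈ J, n ≤ j.1) :
    n ≤ ((periGraph n m).outerBoundary J).ncard := by
  have hnM : n < 2 * (m + n) := (hJ v hv).trans_lt v.2
  have hcenter : (↑(Finset.Iio (⟨n, hnM⟩ : Fin (2 * (m + n)))) : Set _) ⊆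
      (periGraph n m).outerBoundary J :=
    subset_outerBoundary hv fun u hu =>
      have hu : u < ⟨n, hnM⟩ := Finset.mem_Iio.mp (Finset.mem_coe.mp hu)
      ⟨fun huJ => (hJ u huJ).not_gt hu,
        (periGraph_adj_of_lt (hu.trans_le (hJ v hv)).ne hu).symm⟩
  simpa only [Set.ncard_coe_finset, Fin.card_Iio] using Set.ncard_le_ncard hcenter

end PeriGraph

lemma expansion_ineq_of_meets_center {δ c S : ℝ} (hδ0 : 0 ≤ δ) (hδ8 : δ ≤ 8) (hS : 1 ≤ S)
    (hc : c ≤ S) : δ / 8 * c ≤ (2 * S - c) - (1 - δ) := by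
  nlinarith

lemma expansion_ineq_of_avoids_center {δ m n c C B : ℝ} (hδ0 : 0 ≤ δ) (hδ1 : δ ≤ 1)
    (hn : 0 ≤ n) (hm : m ≤ δ * n / 2) (hc : c ≤ m + n) (hC : C ≤ c) (hB : n ≤ B) :
    δ / 8 * c ≤ B - (1 - δ) * C := by
  have h78 : 0 ≤ 1 - 7 * δ / 8 := by linarith
  calc δ / 8 * c = (1 - 7 * δ / 8) * c - (1 - δ) * c := by ring
    _ ≤ (1 - 7 * δ / 8) * (δ * n / 2 + n) - (1 - δ) * C := by
      gcongr
      linarith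
    _ = n - δ * (3 / 8 + 7 * δ / 16) * n - (1 - δ) * C := by ring
    _ ≤ B - (1 - δ) * C := by nlinarith [mul_nonneg hδ0 hn]

theorem stmt16_general (δ : ℝ) (hδ0 : 0 < δ) (hδ1 : δ < 1 / 6) (n m : ℕ)
    (hm : m = ⌊δ * n / 2⌋₊) (κ : ℝ) (hκ : κ = δ / 8)
    (J : Finset (Fin (2 * (m + n)))) (hJ : J.card ≤ m + n) :
    κ * (J.card : ℝ) ≤
      (({i : Fin (2 * (m + n)) | i ∉ J ∧ ∃ j ∈ J, (periGraph n m).Adj j i}.ncard : ℝ))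
        - (1 - δ) * (Nat.card ((periGraph n m).induce (J : Set (Fin (2 * (m + n))))).ConnectedComponent : ℝ) := by
  subst hκ
  change _ ≤ (((periGraph n m).outerBoundary J).ncard : ℝ) - _
  have hJR : (J.card : ℝ) ≤ m + n := by exact_mod_cast hJ
  by_cases hcenter : ∃ j ∈ J, j.1 < n
  · obtain ⟨v, hv, hvn⟩ := hcenter
    rw [ncard_outerBoundary_periGraph_of_lt hv hvn,
      card_connectedComponent_induce_periGraph_of_lt hv hvn, Nat.cast_sub (by omega)]
    push_cast
    rw [mul_one]
    exact expansion_ineq_of_meets_center hδ0.le (by linarith) (by norm_cast; omega) hJR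
  · push Not at hcenter
    have hC := card_connectedComponent_le_card (G := (periGraph n m).induce (J : Set _))
    rw [Nat.card_coe_set_eq, Set.ncard_coe_finset] at hC
    rcases J.eq_empty_or_nonempty with rfl | ⟨v, hv⟩
    · simp_all
    · have hmδ : (m : ℝ) ≤ δ * n / 2 := hm ▸ Nat.floor_le (by positivity)
      exact expansion_ineq_of_avoids_center hδ0.le (by linarith) n.cast_nonneg hmδ hJR
        (by exact_mod_cast hC) (by exact_mod_cast le_ncard_outerBoundary_periGraph hv hcenter)

/-- Proposition 1.8, expansion step: with δ ∈ (0, 1/6), m = ⌊δn/2⌋, M = 2(m+n) and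
κ = δ/8, every vertex set J with |J| ≤ M/2 satisfies
|∂(J)| − (1−δ)|Con(J)| ≥ κ|J|. -/
theorem stmt16 (δ : ℝ) (hδ0 : 0 < δ) (hδ1 : δ < 1 / 6) (n m : ℕ) (hn : 0 < n)
    (hm : m = ⌊δ * n / 2⌋₊) (κ : ℝ) (hκ : κ = δ / 8)
    (J : Finset (Fin (2 * (m + n)))) (hJ : J.card ≤ m + n) :
    κ * (J.card : ℝ) ≤
      (({i : Fin (2 * (m + n)) | i ∉ J ∧ ∃ j ∈ J, (periGraph n m).Adj j i}.ncard : ℝ))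
        - (1 - δ) * (Nat.card ((periGraph n m).induce (J : Set (Fin (2 * (m + n))))).ConnectedComponent : ℝ) :=
  stmt16_general δ hδ0 hδ1 n m hm κ hκ J hJ
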